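/- arXiv:0709.1155 — 3 statements merged into one kernel-verified Lean document; each statement's English description precedes it below -/
import Mathlib

section
/- Suppose smooth functions r, s, A, B satisfy r' − r² + 2s = A and s'' − (rs)' + s² = B. Then r satisfies the principal equation r''' − 3 r r'' − (7/2)(r')² + 2(2r² + A) r' − A'' − r² A − A²/2 − r⁴/2 + r A' + 2B = 0. -/
open scoped ContDiff


/-- If r' - r² + 2s = A and s'' - (rs)' + s² = B, then r satisfies the
    principal equation. -/
theorem stmt3 (r s A B : ℝ → ℝ)
    (hr : ContDiff ℝ (⊤ : ℕ∞) r) (hs : ContDiff ℝ (⊤ : ℕ∞) s)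
    (hA : ContDiff ℝ (⊤ : ℕ∞) A) (hB : ContDiff ℝ (⊤ : ℕ∞) B)
    (h1 : ∀ z, deriv r z - (r z)^2 + 2 * s z = A z)
    (h2 : ∀ z, deriv (deriv s) z - deriv (fun t => r t * s t) z + (s z)^2 = B z) :
    ∀ z, deriv^[3] r z - 3 * r z * deriv (deriv r) z - (7/2) * (deriv r z)^2
      + 2 * (2 * (r z)^2 + A z) * deriv r z - deriv (deriv A) z
      - (r z)^2 * A z - (A z)^2 / 2 - (r z)^4 / 2 + r z * deriv A z
      + 2 * B z = 0 := by
  have hri : ContDiff ℝ ∞ r := hr.of_le (by simp)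
  have hAi : ContDiff ℝ ∞ A := hA.of_le (by simp)
  have hr' : ContDiff ℝ ∞ (deriv r) := (contDiff_infty_iff_deriv.mp hri).2
  have hr'' : ContDiff ℝ ∞ (deriv (deriv r)) := (contDiff_infty_iff_deriv.mp hr').2
  have hA' : ContDiff ℝ ∞ (deriv A) := (contDiff_infty_iff_deriv.mp hAi).2
  have hseq : s = fun z => (A z + (r z)^2 - deriv r z)/2 := by
    funext z; linarith [h1 z]
  have hds : ∀ z, HasDerivAt s
      ((deriv A z + 2 * r z * deriv r z - deriv (deriv r) z)/2) z := by
    intro z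
    rw [hseq]
    have h := (((hAi.differentiable (by norm_num) z).hasDerivAt.add
      ((hri.differentiable (by norm_num) z).hasDerivAt.pow 2)).sub
      (hr'.differentiable (by norm_num) z).hasDerivAt).div_const 2
    exact h.congr_deriv (by push_cast; ring)
  have hdsf : deriv s = fun z =>
      (deriv A z + 2 * r z * deriv r z - deriv (deriv r) z)/2 := by
    funext z; exact (hds z).deriv
  have hdds : ∀ z, deriv (deriv s) z =
      (deriv (deriv A) z + 2 * (deriv r z * deriv r z + r z * deriv (deriv r) z)
        - deriv (deriv (deriv r)) z)/2 := by
    intro z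
    rw [hdsf]
    have h := (((hA'.differentiable (by norm_num) z).hasDerivAt.add
      (((hri.differentiable (by norm_num) z).hasDerivAt.const_mul 2).mul
        (hr'.differentiable (by norm_num) z).hasDerivAt)).sub
      (hr''.differentiable (by norm_num) z).hasDerivAt).div_const 2
    exact h.deriv.trans (by ring)
  have hdrs : ∀ z, deriv (fun t => r t * s t) z =
      deriv r z * s z + r z * deriv s z := by
    intro z
    exact deriv_mul (hri.differentiable (by norm_num) z) (hs.differentiable (by norm_num) z)
  intro z
  have e2 := h2 z
  rw [hdds z, hdrs z, (hds z).deriv] at e2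
  have e1 : s z = (A z + (r z)^2 - deriv r z)/2 := by linarith [h1 z]
  rw [e1] at e2
  have h3 : deriv^[3] r z = deriv (deriv (deriv r)) z := by
    simp [Function.iterate_succ, Function.comp]
  rw [h3]
  nlinarith [e2, sq_nonneg (r z)]
end

section
/- Let k₁,k₂,k₃,k₄ ∈ ℝ with k₁k₄ − k₂k₃ = −1, and define y(x) = 3[3k₃(k₃x−k₁)²(k₄x−k₂) + 2k₄(k₄x−k₂)³ + k₄(k₃x−k₁)³] / ((k₄x−k₂)[2(k₁−k₃x)³ − (k₄x−k₂)³]). Then on any interval where the denominator is nonzero, y satisfies the Chazy equation y''' = 2 y y'' − 3(y')² + (4/27)(6y' − y²)². -/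
/-!
Write `U = k₃x - k₁`, `V = k₄x - k₂`, so that `y = N / D` with `N`, `D` polynomials in `U`, `V`.
For any quotient of polynomials, `y⁽ⁿ⁾ = Pₙ / Dⁿ⁺¹` where `P₀ = N` and `Pₙ₊₁ = Pₙ' D - (n + 1) Pₙ D'`,
so the Chazy equation for `y` is equivalent to the polynomial identity
`27 P₃ = 54 P₀ P₂ - 81 P₁² + 4 (6 P₁ - P₀²)²`. Since `U' = k₃` and `V' = k₄` are constants, this
identity can be checked by expanding everything as a polynomial in `U`, `V`, `k₃`, `k₄`.
-/

open Polynomial Filter Topology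

noncomputable def derivNumerator (N D : ℝ[X]) : ℕ → ℝ[X]
  | 0 => N
  | n + 1 => derivative (derivNumerator N D n) * D - (n + 1) * derivNumerator N D n * derivative D

theorem iterate_deriv_div_eval (N D : ℝ[X]) (n : ℕ) {x : ℝ} (hx : D.eval x ≠ 0) :
    deriv^[n] (fun x => N.eval x / D.eval x) x =
      (derivNumerator N D n).eval x / D.eval x ^ (n + 1) := by
  induction n generalizing x with
  | zero => simp [derivNumerator]
  | succ n ih =>
    have hloc : deriv^[n] (fun x => N.eval x / D.eval x) =ᶠ[𝓝 x]
        fun s => (derivNumerator N D n).eval s / D.eval s ^ (n + 1) :=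
      (D.continuous.continuousAt.eventually_ne hx).mono fun s hs => ih hs
    rw [Function.iterate_succ_apply', hloc.deriv_eq]
    refine (((derivNumerator N D n).hasDerivAt x).div ((D.hasDerivAt x).pow (n + 1))
      (pow_ne_zero _ hx)).deriv.trans ?_
    simp only [derivNumerator, eval_sub, eval_mul, eval_add, eval_natCast, eval_one, Pi.pow_apply,
      Nat.cast_add, Nat.cast_one, Nat.add_sub_cancel]
    field_simp
    ring

theorem chazy_of_derivNumerator_identity (N D : ℝ[X])
    (h : 27 * derivNumerator N D 3 = 54 * N * derivNumerator N D 2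
      - 81 * derivNumerator N D 1 ^ 2 + 4 * (6 * derivNumerator N D 1 - N ^ 2) ^ 2)
    {x : ℝ} (hx : D.eval x ≠ 0) :
    let y := fun x => N.eval x / D.eval x
    deriv^[3] y x = 2 * y x * deriv (deriv y) x - 3 * (deriv y x) ^ 2
      + (4 / 27) * (6 * deriv y x - (y x) ^ 2) ^ 2 := by
  intro y
  have h1 : deriv y x = _ := iterate_deriv_div_eval N D 1 hx
  have h2 : deriv (deriv y) x = _ := iterate_deriv_div_eval N D 2 hx
  have h3 : deriv^[3] y x = _ := iterate_deriv_div_eval N D 3 hx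
  have he := congrArg (eval x) h
  simp only [eval_mul, eval_sub, eval_add, eval_pow, eval_ofNat] at he
  rw [h3, h2, h1]
  simp only [y]
  field_simp
  linear_combination eval x D ^ 11 * he

noncomputable def chazyNumerator (a b : ℝ) (U V : ℝ[X]) : ℝ[X] :=
  3 * (3 * C a * U ^ 2 * V + 2 * C b * V ^ 3 + C b * U ^ 3)

noncomputable def chazyDenominator (U V : ℝ[X]) : ℝ[X] :=
  V * (2 * (-U) ^ 3 - V ^ 3)

theorem chazy_numerator_identity {U V : ℝ[X]} {a b : ℝ} (hU : derivative U = C a)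
    (hV : derivative V = C b) :
    let N := chazyNumerator a b U V
    let D := chazyDenominator U V
    27 * derivNumerator N D 3 = 54 * N * derivNumerator N D 2
      - 81 * derivNumerator N D 1 ^ 2 + 4 * (6 * derivNumerator N D 1 - N ^ 2) ^ 2 := by
  intro N D
  simp only [N, D, chazyNumerator, chazyDenominator, derivNumerator, derivative_mul,
    derivative_add, derivative_sub, derivative_pow, derivative_neg, derivative_C, derivative_ofNat,
    derivative_one, derivative_zero, derivative_natCast, map_natCast, Nat.cast_ofNat, C_ofNat,
    hU, hV]
  ring

theorem stmt14_general (k₁ k₂ k₃ k₄ : ℝ)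
    (y : ℝ → ℝ)
    (hy : ∀ x, y x = 3 * (3 * k₃ * (k₃ * x - k₁)^2 * (k₄ * x - k₂)
        + 2 * k₄ * (k₄ * x - k₂)^3 + k₄ * (k₃ * x - k₁)^3)
      / ((k₄ * x - k₂) * (2 * (k₁ - k₃ * x)^3 - (k₄ * x - k₂)^3))) :
    ∀ x, (k₄ * x - k₂) * (2 * (k₁ - k₃ * x)^3 - (k₄ * x - k₂)^3) ≠ 0 →
      deriv^[3] y x = 2 * y x * deriv (deriv y) x - 3 * (deriv y x)^2
        + (4/27) * (6 * deriv y x - (y x)^2)^2 := by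
  intro x hx
  set U : ℝ[X] := C k₃ * X - C k₁
  set V : ℝ[X] := C k₄ * X - C k₂
  have hD : ∀ s, (chazyDenominator U V).eval s
      = (k₄ * s - k₂) * (2 * (k₁ - k₃ * s)^3 - (k₄ * s - k₂)^3) := by
    intro s
    simp only [U, V, chazyDenominator, eval_mul, eval_sub, eval_pow, eval_C, eval_X,
      eval_ofNat, neg_sub]
  have hyND : y = fun s => (chazyNumerator k₃ k₄ U V).eval s / (chazyDenominator U V).eval s := by
    funext s
    rw [hy, hD]
    simp only [U, V, chazyNumerator, eval_mul, eval_add, eval_sub, eval_pow, eval_C, eval_X,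
      eval_ofNat]
  subst hyND
  exact chazy_of_derivNumerator_identity _ _ (chazy_numerator_identity (by simp [U]) (by simp [V]))
    ((hD x).trans_ne hx)

/-- The rational function
    y(x) = 3[3k₃(k₃x-k₁)²(k₄x-k₂) + 2k₄(k₄x-k₂)³ + k₄(k₃x-k₁)³]
           / ((k₄x-k₂)[2(k₁-k₃x)³ - (k₄x-k₂)³]),
    with k₁k₄ - k₂k₃ = -1, satisfies the Chazy equation with α = 4/27
    wherever the denominator is nonzero. -/
theorem stmt14 (k₁ k₂ k₃ k₄ : ℝ)
    (hk : k₁ * k₄ - k₂ * k₃ = -1)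
    (y : ℝ → ℝ)
    (hy : ∀ x, y x = 3 * (3 * k₃ * (k₃ * x - k₁)^2 * (k₄ * x - k₂)
        + 2 * k₄ * (k₄ * x - k₂)^3 + k₄ * (k₃ * x - k₁)^3)
      / ((k₄ * x - k₂) * (2 * (k₁ - k₃ * x)^3 - (k₄ * x - k₂)^3))) :
    ∀ x, (k₄ * x - k₂) * (2 * (k₁ - k₃ * x)^3 - (k₄ * x - k₂)^3) ≠ 0 →
      deriv^[3] y x = 2 * y x * deriv (deriv y) x - 3 * (deriv y x)^2
        + (4/27) * (6 * deriv y x - (y x)^2)^2 :=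
  stmt14_general k₁ k₂ k₃ k₄ y hy
end

section
/- If r, s are smooth and satisfy both factorization conditions (r' − r² + 2s = A, s'' − (rs)' + s² = B) and U is smooth with U'''' + (A U')' + B U = ω² U, and V := U'' + r U' + s U, then V'''' + (Â V')' + B̂ V = ω² V, where Â = 2s − 3r' − r² and B̂ = s² + s'' − r''' − r r'' + r s' − s r'. -/
set_option maxHeartbeats 2000000



/-- If r, s satisfy both factorization conditions, U satisfies the beam
    eigenvalue equation U'''' + (A U')' + B U = ω² U, and V := U'' + rU' + sU,
    then V'''' + (Â V')' + B̂ V = ω² V with Â = 2s - 3r' - r² and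
    B̂ = s² + s'' - r''' - r r'' + r s' - s r'. -/
theorem stmt19 (r s A B U : ℝ → ℝ) (ω : ℝ)
    (hr : ContDiff ℝ (⊤ : ℕ∞) r) (hs : ContDiff ℝ (⊤ : ℕ∞) s)
    (hA : ContDiff ℝ (⊤ : ℕ∞) A) (hB : ContDiff ℝ (⊤ : ℕ∞) B) (hU : ContDiff ℝ (⊤ : ℕ∞) U)
    (h1 : ∀ z, deriv r z - (r z)^2 + 2 * s z = A z)
    (h2 : ∀ z, deriv (deriv s) z - deriv (fun t => r t * s t) z + (s z)^2 = B z)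
    (heig : ∀ z, deriv^[4] U z + deriv (fun t => A t * deriv U t) z + B z * U z
      = ω^2 * U z)
    (V : ℝ → ℝ)
    (hV : ∀ z, V z = deriv (deriv U) z + r z * deriv U z + s z * U z)
    (Ahat Bhat : ℝ → ℝ)
    (hAhat : ∀ z, Ahat z = 2 * s z - 3 * deriv r z - (r z)^2)
    (hBhat : ∀ z, Bhat z = (s z)^2 + deriv (deriv s) z - deriv^[3] r z
      - r z * deriv (deriv r) z + r z * deriv s z - s z * deriv r z) :
    ∀ z, deriv^[4] V z + deriv (fun t => Ahat t * deriv V t) z + Bhat z * V z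
      = ω^2 * V z := by
  have hA' : A = fun z => deriv r z - (r z)^2 + 2 * s z := funext fun z => (h1 z).symm
  have hB' : B = fun z => deriv (deriv s) z - deriv (fun t => r t * s t) z + (s z)^2 :=
    funext fun z => (h2 z).symm
  have hV' : V = fun z => deriv (deriv U) z + r z * deriv U z + s z * U z := funext hV
  have hAh' : Ahat = fun z => 2 * s z - 3 * deriv r z - (r z)^2 := funext hAhat
  have hBh' : Bhat = fun z => (s z)^2 + deriv (deriv s) z - deriv^[3] r z
      - r z * deriv (deriv r) z + r z * deriv s z - s z * deriv r z := funext hBhat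
  subst hA' hB' hV' hAh' hBh'
  have hr' : ContDiff ℝ ((⊤ : ℕ∞) : WithTop ℕ∞) r := hr.of_le (by simp)
  have hs' : ContDiff ℝ ((⊤ : ℕ∞) : WithTop ℕ∞) s := hs.of_le (by simp)
  have hU' : ContDiff ℝ ((⊤ : ℕ∞) : WithTop ℕ∞) U := hU.of_le (by simp)
  have one_le : ((⊤ : ℕ∞) : WithTop ℕ∞) ≠ 0 := by simp
  have hdr0 : Differentiable ℝ r := hr'.differentiable one_le
  have hdr1 : Differentiable ℝ (deriv r) := (hr'.iterate_deriv 1).differentiable one_le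
  have hdr2 : Differentiable ℝ (deriv (deriv r)) :=
    (hr'.iterate_deriv 2).differentiable one_le
  have hdr3 : Differentiable ℝ (deriv (deriv (deriv r))) :=
    (hr'.iterate_deriv 3).differentiable one_le
  have hds0 : Differentiable ℝ s := hs'.differentiable one_le
  have hds1 : Differentiable ℝ (deriv s) := (hs'.iterate_deriv 1).differentiable one_le
  have hds2 : Differentiable ℝ (deriv (deriv s)) :=
    (hs'.iterate_deriv 2).differentiable one_le
  have hds3 : Differentiable ℝ (deriv (deriv (deriv s))) :=
    (hs'.iterate_deriv 3).differentiable one_le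
  have hdU0 : Differentiable ℝ U := hU'.differentiable one_le
  have hdU1 : Differentiable ℝ (deriv U) := (hU'.iterate_deriv 1).differentiable one_le
  have hdU2 : Differentiable ℝ (deriv (deriv U)) :=
    (hU'.iterate_deriv 2).differentiable one_le
  have hdU3 : Differentiable ℝ (deriv (deriv (deriv U))) :=
    (hU'.iterate_deriv 3).differentiable one_le
  have hdU4 : Differentiable ℝ (deriv (deriv (deriv (deriv U)))) :=
    (hU'.iterate_deriv 4).differentiable one_le
  have hdU5 : Differentiable ℝ (deriv (deriv (deriv (deriv (deriv U))))) :=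
    (hU'.iterate_deriv 5).differentiable one_le
  -- expansion of the derivatives of V
  have e1 : deriv (fun z => deriv (deriv U) z + r z * deriv U z + s z * U z)
      = fun z => (1 : ℝ) * (U z * ((deriv s) z)) + (1 : ℝ) * ((deriv U) z * ((deriv r) z)) + (1 : ℝ) * ((deriv U) z * (s z)) + (1 : ℝ) * ((deriv (deriv U)) z * (r z)) + (1 : ℝ) * ((deriv (deriv (deriv U))) z) := by
    funext z
    simp (disch := fun_prop) only [deriv_fun_add, deriv_fun_sub, deriv_fun_mul, deriv_const_mul,
      deriv_const', pow_two, Pi.zero_apply, mul_zero, zero_mul, add_zero, zero_add]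
    ring
  have e2 : deriv (fun z => (1 : ℝ) * (U z * ((deriv s) z)) + (1 : ℝ) * ((deriv U) z * ((deriv r) z)) + (1 : ℝ) * ((deriv U) z * (s z)) + (1 : ℝ) * ((deriv (deriv U)) z * (r z)) + (1 : ℝ) * ((deriv (deriv (deriv U))) z)) = fun z => (1 : ℝ) * (U z * ((deriv (deriv s)) z)) + (1 : ℝ) * ((deriv U) z * ((deriv (deriv r)) z)) + (2 : ℝ) * ((deriv U) z * ((deriv s) z)) + (2 : ℝ) * ((deriv (deriv U)) z * ((deriv r) z)) + (1 : ℝ) * ((deriv (deriv U)) z * (s z)) + (1 : ℝ) * ((deriv (deriv (deriv U))) z * (r z)) + (1 : ℝ) * ((deriv (deriv (deriv (deriv U)))) z) := by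
    funext z
    simp (disch := fun_prop) only [deriv_fun_add, deriv_fun_sub, deriv_fun_mul, deriv_const_mul,
      deriv_const', pow_two, Pi.zero_apply, mul_zero, zero_mul, add_zero, zero_add]
    ring
  have e3 : deriv (fun z => (1 : ℝ) * (U z * ((deriv (deriv s)) z)) + (1 : ℝ) * ((deriv U) z * ((deriv (deriv r)) z)) + (2 : ℝ) * ((deriv U) z * ((deriv s) z)) + (2 : ℝ) * ((deriv (deriv U)) z * ((deriv r) z)) + (1 : ℝ) * ((deriv (deriv U)) z * (s z)) + (1 : ℝ) * ((deriv (deriv (deriv U))) z * (r z)) + (1 : ℝ) * ((deriv (deriv (deriv (deriv U)))) z)) = fun z => (1 : ℝ) * (U z * ((deriv (deriv (deriv s))) z)) + (1 : ℝ) * ((deriv U) z * ((deriv (deriv (deriv r))) z)) + (3 : ℝ) * ((deriv U) z * ((deriv (deriv s)) z)) + (3 : ℝ) * ((deriv (deriv U)) z * ((deriv (deriv r)) z)) + (3 : ℝ) * ((deriv (deriv U)) z * ((deriv s) z)) + (3 : ℝ) * ((deriv (deriv (deriv U))) z * ((deriv r) z)) + (1 : ℝ) * ((deriv (deriv (deriv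 U))) z * (s z)) + (1 : ℝ) * ((deriv (deriv (deriv (deriv U)))) z * (r z)) + (1 : ℝ) * ((deriv (deriv (deriv (deriv (deriv U))))) z) := by
    funext z
    simp (disch := fun_prop) only [deriv_fun_add, deriv_fun_sub, deriv_fun_mul, deriv_const_mul,
      deriv_const', pow_two, Pi.zero_apply, mul_zero, zero_mul, add_zero, zero_add]
    ring
  -- expansion of the eigenvalue equation and its derivatives
  have hE0 : ∀ z, (-1 : ℝ) * (U z * (r z * ((deriv s) z))) + (-1 : ℝ) * (U z * ((deriv r) z * (s z))) + (1 : ℝ) * (U z * (s z * (s z))) + (1 : ℝ) * (U z * ((deriv (deriv s)) z)) + (-2 : ℝ) * ((deriv U) z * (r z * ((deriv r) z))) + (1 : ℝ) * ((deriv U) z * ((deriv (deriv r)) z)) + (2 : ℝ) * ((deriv U) z * ((deriv s) z)) + (-1 : ℝ) * ((deriv (deriv U)) z * (r z * (r z))) + (1 : ℝ) * ((deriv (deriv U)) z * ((deriv r) z)) + (2 : ℝ) * ((deriv (deriv U)) z * (s z)) + (1 : ℝ) * ((deriv (deriv (deriv (deriv U)))) z) = ω^2 * U z := by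
    intro z
    have h := heig z
    rw [show (deriv^[4] U) = deriv (deriv (deriv (deriv U))) from rfl] at h
    simp (disch := fun_prop) only [deriv_fun_add, deriv_fun_sub, deriv_fun_mul, deriv_const_mul,
      deriv_const', pow_two, Pi.zero_apply, mul_zero, zero_mul, add_zero, zero_add] at h
    linear_combination h
  have hE0f : (fun z => (-1 : ℝ) * (U z * (r z * ((deriv s) z))) + (-1 : ℝ) * (U z * ((deriv r) z * (s z))) + (1 : ℝ) * (U z * (s z * (s z))) + (1 : ℝ) * (U z * ((deriv (deriv s)) z)) + (-2 : ℝ) * ((deriv U) z * (r z * ((deriv r) z))) + (1 : ℝ) * ((deriv U) z * ((deriv (deriv r)) z)) + (2 : ℝ) * ((deriv U) z * ((deriv s) z)) + (-1 : ℝ) * ((deriv (deriv U)) z * (r z * (r z))) + (1 : ℝ) * ((deriv (deriv U)) z * ((deriv r) z)) + (2 : ℝ) * ((deriv (deriv U)) z * (s z)) + (1 : ℝ) * ((deriv (deriv (deriv (deriv U)))) z)) = fun z => ω^2 * U z := funext hE0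
  have hE1 : ∀ z, (-1 : ℝ) * (U z * (r z * ((deriv (deriv s)) z))) + (-2 : ℝ) * (U z * ((deriv r) z * ((deriv s) z))) + (-1 : ℝ) * (U z * ((deriv (deriv r)) z * (s z))) + (2 : ℝ) * (U z * (s z * ((deriv s) z))) + (1 : ℝ) * (U z * ((deriv (deriv (deriv s))) z)) + (-2 : ℝ) * ((deriv U) z * (r z * ((deriv (deriv r)) z))) + (-1 : ℝ) * ((deriv U) z * (r z * ((deriv s) z))) + (-2 : ℝ) * ((deriv U) z * ((deriv r) z * ((deriv r) z))) + (-1 : ℝ) * ((deriv U) z * ((deriv r) z * (s z))) + (1 : ℝ) * ((deriv U) z * ((deriv (deriv (deriv r))) z)) + (1 : ℝ) * ((deriv U) z * (s z * (s z))) + (3 : ℝ) * ((deriv U) z * ((deriv (deriv s)) z)) + (-4 : ℝ) * ((deriv (deriv U)) z * (r z * ((deriv r) z))) + (2 : ℝ) * ((deriv (deriv U)) z * ((deriv (deriv r)) z)) + (4 : ℝ) * ((deriv (deriv U)) z * ((deriv s) z)) + (-1 : ℝ) * ((deriv (deriv (deriv U))) z * (r z * (r z))) + (1 : ℝ) * ((deriv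 (deriv (deriv U))) z * ((deriv r) z)) + (2 : ℝ) * ((deriv (deriv (deriv U))) z * (s z)) + (1 : ℝ) * ((deriv (deriv (deriv (deriv (deriv U))))) z) = ω^2 * deriv U z := by
    intro z
    have h := congrFun (congrArg deriv hE0f) z
    simp (disch := fun_prop) only [deriv_fun_add, deriv_fun_sub, deriv_fun_mul, deriv_const_mul,
      deriv_const', pow_two, Pi.zero_apply, mul_zero, zero_mul, add_zero, zero_add] at h
    linear_combination h
  have hE1f : (fun z => (-1 : ℝ) * (U z * (r z * ((deriv (deriv s)) z))) + (-2 : ℝ) * (U z * ((deriv r) z * ((deriv s) z))) + (-1 : ℝ) * (U z * ((deriv (deriv r)) z * (s z))) + (2 : ℝ) * (U z * (s z * ((deriv s) z))) + (1 : ℝ) * (U z * ((deriv (deriv (deriv s))) z)) + (-2 : ℝ) * ((deriv U) z * (r z * ((deriv (deriv r)) z))) + (-1 : ℝ) * ((deriv U) z * (r z * ((deriv s) z))) + (-2 : ℝ) * ((deriv U) z * ((deriv r) z * ((deriv r) z))) + (-1 : ℝ) * ((deriv U) z * ((deriv r) z * (s z))) + (1 : ℝ) * ((deriv U) z * ((deriv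 (deriv (deriv r))) z)) + (1 : ℝ) * ((deriv U) z * (s z * (s z))) + (3 : ℝ) * ((deriv U) z * ((deriv (deriv s)) z)) + (-4 : ℝ) * ((deriv (deriv U)) z * (r z * ((deriv r) z))) + (2 : ℝ) * ((deriv (deriv U)) z * ((deriv (deriv r)) z)) + (4 : ℝ) * ((deriv (deriv U)) z * ((deriv s) z)) + (-1 : ℝ) * ((deriv (deriv (deriv U))) z * (r z * (r z))) + (1 : ℝ) * ((deriv (deriv (deriv U))) z * ((deriv r) z)) + (2 : ℝ) * ((deriv (deriv (deriv U))) z * (s z)) + (1 : ℝ) * ((deriv (deriv (deriv (deriv (deriv U))))) z)) = fun z => ω^2 * deriv U z := funext hE1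
  have hE2 : ∀ z, (-1 : ℝ) * (U z * (r z * ((deriv (deriv (deriv s))) z))) + (-3 : ℝ) * (U z * ((deriv r) z * ((deriv (deriv s)) z))) + (-3 : ℝ) * (U z * ((deriv (deriv r)) z * ((deriv s) z))) + (-1 : ℝ) * (U z * ((deriv (deriv (deriv r))) z * (s z))) + (2 : ℝ) * (U z * (s z * ((deriv (deriv s)) z))) + (2 : ℝ) * (U z * ((deriv s) z * ((deriv s) z))) + (1 : ℝ) * (U z * ((deriv (deriv (deriv (deriv s)))) z)) + (-2 : ℝ) * ((deriv U) z * (r z * ((deriv (deriv (deriv r))) z))) + (-2 : ℝ) * ((deriv U) z * (r z * ((deriv (deriv s)) z))) + (-6 : ℝ) * ((deriv U) z * ((deriv r) z * ((deriv (deriv r)) z))) + (-4 : ℝ) * ((deriv U) z * ((deriv r) z * ((deriv s) z))) + (-2 : ℝ) * ((deriv U) z * ((deriv (deriv r)) z * (s z))) + (1 : ℝ) * ((deriv U) z * ((deriv (deriv (deriv (deriv r)))) z)) + (4 : ℝ) * ((deriv U) z * (s z * ((deriv s) z))) + (4 : ℝ) * ((deriv U) z * ((deriv (deriv (deriv s)))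 z)) + (-6 : ℝ) * ((deriv (deriv U)) z * (r z * ((deriv (deriv r)) z))) + (-1 : ℝ) * ((deriv (deriv U)) z * (r z * ((deriv s) z))) + (-6 : ℝ) * ((deriv (deriv U)) z * ((deriv r) z * ((deriv r) z))) + (-1 : ℝ) * ((deriv (deriv U)) z * ((deriv r) z * (s z))) + (3 : ℝ) * ((deriv (deriv U)) z * ((deriv (deriv (deriv r))) z)) + (1 : ℝ) * ((deriv (deriv U)) z * (s z * (s z))) + (7 : ℝ) * ((deriv (deriv U)) z * ((deriv (deriv s)) z)) + (-6 : ℝ) * ((deriv (deriv (deriv U))) z * (r z * ((deriv r) z))) + (3 : ℝ) * ((deriv (deriv (deriv U))) z * ((deriv (deriv r)) z)) + (6 : ℝ) * ((deriv (deriv (deriv U))) z * ((deriv s) z)) + (-1 : ℝ) * ((deriv (deriv (deriv (deriv U)))) z * (r z * (r z))) + (1 : ℝ) * ((deriv (deriv (deriv (deriv U)))) z * ((deriv r) z)) + (2 : ℝ) * ((deriv (deriv (deriv (deriv U)))) z * (s z)) + (1 : ℝ) * ((deriv (deriv (deriv (deriv (deriv (deriv U)))))) z) = ω^2 * deriv (deriv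 U) z := by
    intro z
    have h := congrFun (congrArg deriv hE1f) z
    simp (disch := fun_prop) only [deriv_fun_add, deriv_fun_sub, deriv_fun_mul, deriv_const_mul,
      deriv_const', pow_two, Pi.zero_apply, mul_zero, zero_mul, add_zero, zero_add] at h
    linear_combination h
  -- final computation
  intro z
  rw [show (deriv^[4] (fun z => deriv (deriv U) z + r z * deriv U z + s z * U z))
      = deriv (deriv (deriv (deriv (fun z => deriv (deriv U) z + r z * deriv U z + s z * U z))))
      from rfl,
    show (deriv^[3] r) = deriv (deriv (deriv r)) from rfl]
  simp (disch := fun_prop) only [e1, e2, e3, deriv_fun_add, deriv_fun_sub, deriv_fun_mul,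
    deriv_const_mul, deriv_const', pow_two, Pi.zero_apply, mul_zero, zero_mul,
    add_zero, zero_add]
  linear_combination hE2 z + r z * hE1 z + s z * hE0 z
end
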